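/- arXiv:1204.4447 — 4 statements merged into one kernel-verified Lean document; each statement's English description precedes it below -/
import Mathlib

section
/- For every natural number n ≥ 1, the coefficient of Y^{2^n} in F n, viewed as a polynomial in the single variable Y with coefficients in ℤ[k, b, X], equals k^{2^n − 1}·b^{2^{n−1}}. Equivalently, the only exponent vector in the support of F n whose Y-exponent equals 2^n is the monomial k^{2^n − 1}·b^{2^{n−1}}·Y^{2^n}, and it occurs with coefficient 1. -/
open MvPolynomial

/-- The pair `(Fₙ, Gₙ)` in `ℤ[k, b, X, Y]` (variables `0 ↦ k`, `1 ↦ b`, `2 ↦ X`, `3 ↦ Y`),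
defined by `F 1 = k (X² + b Y²)`, `G 1 = X Y`,
`F (n+1) = k ((F n)² + b (G n)²)`, `G (n+1) = (F n) (G n)`. -/
noncomputable def FG : ℕ → MvPolynomial (Fin 4) ℤ × MvPolynomial (Fin 4) ℤ
  | 0 => (0, 0)
  | 1 => (X 0 * (X 2 ^ 2 + X 1 * X 3 ^ 2), X 2 * X 3)
  | n + 2 =>
      (X 0 * ((FG (n + 1)).1 ^ 2 + X 1 * (FG (n + 1)).2 ^ 2),
        (FG (n + 1)).1 * (FG (n + 1)).2)

noncomputable def F (n : ℕ) : MvPolynomial (Fin 4) ℤ := (FG n).1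
noncomputable def G (n : ℕ) : MvPolynomial (Fin 4) ℤ := (FG n).2

/-!
Track the degree in `Y`. With `Mₙ = k^(2^n - 1) b^(2^(n-1)) Y^(2^n)`, both `F n - Mₙ` and `G n`
have `Y`-degree `< 2^n`: since `k Mₙ² = Mₙ₊₁`, the difference
`F (n+1) - Mₙ₊₁ = k ((F n - Mₙ) (F n + Mₙ) + b (G n)²)` has `Y`-degree `< 2^n + 2^n`, and so does
`G (n+1) = F n * G n`. Hence `Mₙ` is the only term of `F n` of `Y`-degree `2^n`.
-/

section DegreeOf

variable {σ R : Type*} {i : σ}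

theorem MvPolynomial.degreeOf_mul_lt_of_lt_of_le [CommSemiring R] {p q : MvPolynomial σ R}
    {a b : ℕ} (hp : degreeOf i p < a) (hq : degreeOf i q ≤ b) : degreeOf i (p * q) < a + b :=
  (degreeOf_mul_le i p q).trans_lt (by omega)

theorem MvPolynomial.degreeOf_add_lt [CommSemiring R] {p q : MvPolynomial σ R} {d : ℕ}
    (hp : degreeOf i p < d) (hq : degreeOf i q < d) : degreeOf i (p + q) < d :=
  (degreeOf_add_le i p q).trans_lt (max_lt hp hq)

theorem MvPolynomial.coeff_eq_of_degreeOf_sub_lt [CommRing R] {p q : MvPolynomial σ R}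
    {m : σ →₀ ℕ} (h : degreeOf i (p - q) < m i) : coeff m p = coeff m q := by
  have := notMem_support_iff.1 (notMem_support_of_degreeOf_lt i h)
  rwa [coeff_sub, sub_eq_zero] at this

end DegreeOf

lemma F_succ {n : ℕ} (hn : 1 ≤ n) : F (n + 1) = X 0 * (F n ^ 2 + X 1 * G n ^ 2) := by
  obtain ⟨n, rfl⟩ := Nat.exists_eq_add_of_le' hn
  rfl

lemma G_succ {n : ℕ} (hn : 1 ≤ n) : G (n + 1) = F n * G n := by
  obtain ⟨n, rfl⟩ := Nat.exists_eq_add_of_le' hn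
  rfl

noncomputable def leadExp (n : ℕ) : Fin 4 →₀ ℕ :=
  Finsupp.single 0 (2 ^ n - 1) + Finsupp.single 1 (2 ^ (n - 1)) + Finsupp.single 3 (2 ^ n)

lemma leadExp_apply_three (n : ℕ) : leadExp n 3 = 2 ^ n := by
  simp [leadExp]

lemma leadExp_succ {n : ℕ} (hn : 1 ≤ n) :
    leadExp (n + 1) = Finsupp.single 0 1 + (leadExp n + leadExp n) := by
  obtain ⟨n, rfl⟩ := Nat.exists_eq_add_of_le' hn
  have := Nat.one_le_two_pow (n := n)
  ext i
  fin_cases i <;> simp [leadExp, pow_succ] <;> omega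

lemma monomial_leadExp_one : monomial (leadExp 1) (1 : ℤ) = X 0 * X 1 * X 3 ^ 2 := by
  rw [X_pow_eq_monomial, X, X, monomial_mul, monomial_mul, leadExp]
  norm_num

lemma X_zero_mul_monomial_leadExp_sq {n : ℕ} (hn : 1 ≤ n) :
    X 0 * monomial (leadExp n) (1 : ℤ) ^ 2 = monomial (leadExp (n + 1)) 1 := by
  rw [sq, monomial_mul, X, monomial_mul, leadExp_succ hn, one_mul, one_mul]

lemma degreeOf_monomial_leadExp (n : ℕ) :
    degreeOf 3 (monomial (leadExp n) (1 : ℤ)) = 2 ^ n := by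
  rw [degreeOf_monomial_eq _ _ one_ne_zero, leadExp_apply_three]

lemma degreeOf_F_one_sub_lt : degreeOf 3 (F 1 - monomial (leadExp 1) 1) < 2 ^ 1 := by
  have hF : F 1 - monomial (leadExp 1) 1 = X 2 ^ 2 * X 0 := by
    rw [monomial_leadExp_one]
    change X 0 * (X 2 ^ 2 + X 1 * X 3 ^ 2) - _ = _
    ring
  rw [hF, degreeOf_mul_X_of_ne _ (by decide), degreeOf_X_pow_of_ne _ (by decide)]
  norm_num

lemma degreeOf_G_one_lt : degreeOf 3 (G 1) < 2 ^ 1 := by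
  have := degreeOf_mul_X_self (R := ℤ) (3 : Fin 4) (X 2)
  rw [degreeOf_X_of_ne (by decide)] at this
  exact this.trans_lt (by norm_num : 0 + 1 < 2 ^ 1)

section Step

variable {n : ℕ} (hn : 1 ≤ n) (hF : degreeOf 3 (F n - monomial (leadExp n) 1) < 2 ^ n)
  (hG : degreeOf 3 (G n) < 2 ^ n)
include hF

lemma degreeOf_F_le : degreeOf 3 (F n) ≤ 2 ^ n := by
  have := degreeOf_add_le 3 (F n - monomial (leadExp n) 1) (monomial (leadExp n) 1)
  rw [sub_add_cancel, degreeOf_monomial_leadExp] at this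
  omega

include hn hG

lemma degreeOf_F_succ_sub_lt :
    degreeOf 3 (F (n + 1) - monomial (leadExp (n + 1)) 1) < 2 ^ (n + 1) := by
  set M := monomial (leadExp n) (1 : ℤ)
  have key : F (n + 1) - monomial (leadExp (n + 1)) 1 =
      ((F n - M) * (F n + M) + G n * G n * X 1) * X 0 := by
    rw [F_succ hn, ← X_zero_mul_monomial_leadExp_sq hn]
    ring
  have hFM : degreeOf 3 (F n + M) ≤ 2 ^ n :=
    (degreeOf_add_le _ _ _).trans (max_le (degreeOf_F_le hF) (degreeOf_monomial_leadExp n).le)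
  have hGG : degreeOf 3 (G n * G n * X 1) < 2 ^ n + 2 ^ n := by
    rw [degreeOf_mul_X_of_ne _ (by decide)]
    exact degreeOf_mul_lt_of_lt_of_le hG hG.le
  rw [key, degreeOf_mul_X_of_ne _ (by decide), pow_succ, mul_two]
  exact degreeOf_add_lt (degreeOf_mul_lt_of_lt_of_le hF hFM) hGG

lemma degreeOf_G_succ_lt : degreeOf 3 (G (n + 1)) < 2 ^ (n + 1) := by
  rw [G_succ hn, mul_comm, pow_succ, mul_two]
  exact degreeOf_mul_lt_of_lt_of_le hG (degreeOf_F_le hF)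

end Step

lemma degreeOf_F_sub_lt_and_degreeOf_G_lt {n : ℕ} (hn : 1 ≤ n) :
    degreeOf 3 (F n - monomial (leadExp n) 1) < 2 ^ n ∧ degreeOf 3 (G n) < 2 ^ n := by
  induction n, hn using Nat.le_induction with
  | base => exact ⟨degreeOf_F_one_sub_lt, degreeOf_G_one_lt⟩
  | succ n hn ih =>
    exact ⟨degreeOf_F_succ_sub_lt hn ih.1 ih.2, degreeOf_G_succ_lt hn ih.1 ih.2⟩

/-- The coefficient of `Y^(2^n)` in `F n`: the unique exponent vector in the support of
`F n` with `Y`-exponent `2^n` is that of `k^(2^n - 1) * b^(2^(n-1)) * Y^(2^n)`,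
with coefficient `1`. -/
theorem coeff_Y_pow_F (n : ℕ) (hn : 1 ≤ n) :
    (∀ m ∈ (F n).support, m 3 = 2 ^ n →
        m = Finsupp.single (0 : Fin 4) (2 ^ n - 1) + Finsupp.single 1 (2 ^ (n - 1)) +
          Finsupp.single 3 (2 ^ n)) ∧
    coeff
      (Finsupp.single (0 : Fin 4) (2 ^ n - 1) + Finsupp.single 1 (2 ^ (n - 1)) +
        Finsupp.single 3 (2 ^ n)) (F n) = 1 := by
  have hcoeff (m : Fin 4 →₀ ℕ) (hm : m 3 = 2 ^ n) :
      coeff m (F n) = coeff m (monomial (leadExp n) 1) :=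
    coeff_eq_of_degreeOf_sub_lt (hm ▸ (degreeOf_F_sub_lt_and_degreeOf_G_lt hn).1)
  change (∀ m ∈ (F n).support, m 3 = 2 ^ n → m = leadExp n) ∧ coeff (leadExp n) (F n) = 1
  refine ⟨fun m hm hm3 ↦ ?_, ?_⟩
  · rw [mem_support_iff, hcoeff m hm3, coeff_monomial] at hm
    exact (ite_ne_right_iff.1 hm).1.symm
  · rw [hcoeff _ (leadExp_apply_three n), coeff_monomial, if_pos rfl]
end

section
/- For each natural number n ≥ 1, define β(n) = ⌈2(2^{n−1} − 1)/3⌉ (as a natural number, β(n) = (2·(2^{n−1} − 1) + 2)/3 with integer division). Then in the ring R = ℤ[k, b, X, Y], the element k^{β(n)} divides the n-th period polynomial Φ n = Y·(F n) − X·(G n). -/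
open MvPolynomial

lemma two_pow_mod_three (m : ℕ) : 2 ^ m % 3 = 1 ∨ 2 ^ m % 3 = 2 := by
  have : ¬ (3 ∣ 2 ^ m) := by
    intro h
    have := (Nat.prime_three.dvd_of_dvd_pow h)
    omega
  omega

lemma key (n : ℕ) (hn : 1 ≤ n) :
    (X 0 : MvPolynomial (Fin 4) ℤ) ^ (2 ^ n / 3 + 2 ^ n % 3 - 1) ∣ F n ∧
    (X 0 : MvPolynomial (Fin 4) ℤ) ^ (2 ^ n / 3) ∣ G n := by
  induction n with
  | zero => omega
  | succ m ih =>
    match m, ih with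
    | 0, _ =>
      constructor
      · norm_num
        exact dvd_mul_right _ _
      · norm_num
    | l + 1, ih =>
      obtain ⟨hF, hG⟩ := ih (by omega)
      set m := l + 1 with hm
      have hr := two_pow_mod_three m
      have hr' := two_pow_mod_three (m + 1)
      have hdm : 2 ^ m = 3 * (2 ^ m / 3) + 2 ^ m % 3 := (Nat.div_add_mod _ _).symm
      have hdm' : 2 ^ (m + 1) = 3 * (2 ^ (m + 1) / 3) + 2 ^ (m + 1) % 3 :=
        (Nat.div_add_mod _ _).symm
      have hpow : 2 ^ (m + 1) = 2 * 2 ^ m := by ring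
      set q := 2 ^ m / 3 with hq
      -- weaken hF to X0^q ∣ F m
      have hF' : (X 0 : MvPolynomial (Fin 4) ℤ) ^ q ∣ F m :=
        dvd_trans (pow_dvd_pow _ (by omega)) hF
      have hFs : F (m + 1) = X 0 * (F m ^ 2 + X 1 * G m ^ 2) := by
        rw [hm]; rfl
      have hGs : G (m + 1) = F m * G m := by
        rw [hm]; rfl
      constructor
      · rw [hFs]
        have h1 : 2 ^ (m + 1) / 3 + 2 ^ (m + 1) % 3 - 1 = 1 + q * 2 := by omega
        rw [h1, pow_add, pow_one]
        refine mul_dvd_mul dvd_rfl (dvd_add ?_ ?_)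
        · rw [pow_mul]
          exact pow_dvd_pow_of_dvd hF' 2
        · rw [pow_mul]
          exact Dvd.dvd.mul_left (pow_dvd_pow_of_dvd hG 2) _
      · rw [hGs]
        have h2 : 2 ^ (m + 1) / 3 = (q + 2 ^ m % 3 - 1) + q := by omega
        rw [h2, pow_add]
        exact mul_dvd_mul hF hG

/-- `k^(β n) ∣ Φ n = Y * F n - X * G n`, where `β n = ⌈2 (2^(n-1) - 1) / 3⌉`. -/
theorem k_pow_dvd_Phi (n : ℕ) (hn : 1 ≤ n) :
    (X 0 : MvPolynomial (Fin 4) ℤ) ^ ((2 * (2 ^ (n - 1) - 1) + 2) / 3) ∣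
      X 3 * F n - X 2 * G n := by
  obtain ⟨m, rfl⟩ : ∃ m, n = m + 1 := ⟨n - 1, by omega⟩
  have h1 : 1 ≤ 2 ^ m := Nat.one_le_two_pow
  have hpow : 2 ^ (m + 1) = 2 * 2 ^ m := by ring
  have he : (2 * (2 ^ (m + 1 - 1) - 1) + 2) / 3 = 2 ^ (m + 1) / 3 := by
    simp only [Nat.add_sub_cancel]
    congr 1
    omega
  rw [he]
  obtain ⟨hF, hG⟩ := key (m + 1) (by omega)
  have hr := two_pow_mod_three (m + 1)
  have hF' : (X 0 : MvPolynomial (Fin 4) ℤ) ^ (2 ^ (m + 1) / 3) ∣ F (m + 1) :=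
    dvd_trans (pow_dvd_pow _ (by omega)) hF
  exact dvd_sub (hF'.mul_left _) (hG.mul_left _)
end

section
/- Let b be a nonzero rational number and let f_b : ℚ → ℚ be given by f_b(z) = z + b/z. Then the set S = {z : ℚ | z ≠ 0 and z is preperiodic under f_b} is finite and its cardinality is 0, 2, or 4. (In the paper's formulation on P¹, which additionally counts the preperiodic points 0 and ∞: the map z ↦ z + b/z has exactly 2, 4, or 6 rational preperiodic points.) -/
/-!
Write `f = addDiv b`. The orbit of a nonzero preperiodic point `z` either reaches `0` or ends in a
cycle avoiding `0`. A nonzero point with `f x = 0` is a square root of `-b`, and a square root of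
`-b` has no preimage, so in the first case `z² = -b`.

On a cycle `|x|_p` is constant for every prime `p`: the points with `|x|_p² > |b|_p` form an
`f`-invariant set on which `|f x|_p = |x|_p`, and points with `|x|_p² < |b|_p` are mapped into it,
so a cycle lies either inside it or on the sphere `|x|_p² = |b|_p`. Hence for a periodic `z` all
valuations of `f z / z = 1 + b / z²` vanish, so it is `±1`, which forces `b = -2z²` and
`f z = -z`. The preimages of the 2-cycle `{z, -z}` are `±2z`, and those have no preimages.

So the nonzero preperiodic points are the rational roots of `(x² + b)(2x² + b)(x² + 2b)`, and
since `2` is not a rational square, either none, or only the first factor, or only the last two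
factors have rational roots.
-/

open Function Set

theorem Function.IsPeriodicPt.mem_of_iterate_mem {α : Type*} {f : α → α} {s : Set α}
    {n j : ℕ} {x : α} (hx : IsPeriodicPt f n x) (hn : 0 < n) (hs : MapsTo f s s)
    (hj : f^[j] x ∈ s) : x ∈ s := by
  have := hs.iterate (n * j - j) hj
  rwa [← iterate_add_apply, Nat.sub_add_cancel (Nat.le_mul_of_pos_left j hn),
    (hx.mul_const j).eq] at this

theorem Function.mem_of_iterate_mem_of_preimage_subset {α : Type*} {f : α → α} {s : Set α}
    (hs : f ⁻¹' s ⊆ s) {k : ℕ} {x : α} (hk : f^[k] x ∈ s) : x ∈ s := by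
  by_contra hx
  exact MapsTo.iterate (f := f) (s := sᶜ) (fun y (hy : y ∉ s) hfy => hy (hs hfy)) k hx hk

theorem Rat.eq_one_or_neg_one_of_padicValRat_eq_zero {q : ℚ} (hq : q ≠ 0)
    (h : ∀ p : ℕ, p.Prime → padicValRat p q = 0) : q = 1 ∨ q = -1 := by
  have hnum_den : q.num.natAbs = q.den :=
    Nat.eq_of_factorization_eq (by simpa using hq) q.den_nz fun p => by
      by_cases hp : p.Prime
      · have := h p hp
        rw [padicValRat_def, padicValInt] at this
        rw [Nat.factorization_def _ hp, Nat.factorization_def _ hp]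
        omega
      · simp [Nat.factorization_eq_zero_of_not_prime _ hp]
  have hden : q.den = 1 := (Nat.coprime_self _).mp (hnum_den ▸ q.reduced)
  rw [← Rat.coe_int_num_of_den_eq_one hden]
  rcases Int.natAbs_eq_iff.mp (hnum_den.trans hden) with h1 | h1 <;> simp [h1]

theorem Rat.eq_zero_of_sq_eq_prime_mul_sq {p : ℕ} (hp : p.Prime) {x y : ℚ}
    (h : x ^ 2 = p * y ^ 2) : y = 0 := by
  by_contra hy
  refine Rat.isSquare_natCast_iff.not.mpr hp.not_isSquare ⟨x / y, ?_⟩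
  field_simp
  linear_combination -h

def addDiv (b w : ℚ) : ℚ := w + b / w

def sqrtSet (b : ℚ) : Set ℚ := {x | x ^ 2 = -b ∨ 2 * x ^ 2 = -b ∨ x ^ 2 = -2 * b}

section addDiv

variable {b x : ℚ}

@[simp]
theorem addDiv_zero (b : ℚ) : addDiv b 0 = 0 := by simp [addDiv]

theorem addDiv_mul_self (hx : x ≠ 0) : addDiv b x * x = x ^ 2 + b := by
  rw [addDiv]; field_simp

theorem addDiv_eq_zero_iff (hx : x ≠ 0) : addDiv b x = 0 ↔ x ^ 2 = -b := by
  rw [← mul_eq_zero_iff_right hx, addDiv_mul_self hx, add_eq_zero_iff_eq_neg]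

theorem addDiv_ne_zero_of_isPeriodicPt {n : ℕ} (hx : x ≠ 0) (hper : IsPeriodicPt (addDiv b) n x)
    (hn : 0 < n) : addDiv b x ≠ 0 := fun h =>
  hx (hper.mem_of_iterate_mem hn (mapsTo_singleton.2 (addDiv_zero b)) (j := 1) h)

theorem addDiv_addDiv_of_two_mul_sq (h : 2 * x ^ 2 = -b) : addDiv b (addDiv b x) = x := by
  rcases eq_or_ne x 0 with rfl | hx
  · simp
  obtain rfl : b = -(2 * x ^ 2) := by linear_combination h
  have hfx : addDiv (-(2 * x ^ 2)) x = -x := by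
    rw [addDiv]; field_simp; ring
  rw [hfx, addDiv]; field_simp; ring

theorem addDiv_iterate_three (h : x ∈ sqrtSet b) :
    (addDiv b)^[3] x = addDiv b x := by
  simp only [iterate_succ, iterate_zero, comp_apply, id]
  rcases h with h | h | h
  · rcases eq_or_ne x 0 with rfl | hx
    · simp
    simp [(addDiv_eq_zero_iff hx).2 h]
  · rw [addDiv_addDiv_of_two_mul_sq h]
  · have hfx : addDiv b x = x / 2 := by
      rcases eq_or_ne x 0 with rfl | hx
      · simp
      obtain rfl : b = -(x ^ 2 / 2) := by linear_combination h / 2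
      rw [addDiv]; field_simp; ring
    rw [addDiv_addDiv_of_two_mul_sq (by rw [hfx]; linear_combination h / 2)]

theorem addDiv_preimage_sq_eq_neg_subset (hb : b ≠ 0) :
    addDiv b ⁻¹' {y | y = 0 ∨ y ^ 2 = -b} ⊆ {y | y = 0 ∨ y ^ 2 = -b} := by
  intro x hfx
  rcases eq_or_ne x 0 with hx | hx
  · exact Or.inl hx
  have hrel := addDiv_mul_self (b := b) hx
  rw [mem_preimage] at hfx
  rcases hfx with hy | hy
  · exact Or.inr ((addDiv_eq_zero_iff hx).1 hy)
  generalize addDiv b x = y at hy hrel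
  -- `2x - y` would be a square root of the discriminant `y² - 4b = 5y²` of `X² - yX + b`
  obtain rfl := Rat.eq_zero_of_sq_eq_prime_mul_sq (p := 5) (by norm_num)
    (x := 2 * x - y) (y := y) (by push_cast; linear_combination -4 * hrel - 4 * hy)
  exact absurd (by linear_combination hy) hb

theorem addDiv_preimage_two_mul_sq_subset (hb : b ≠ 0) :
    addDiv b ⁻¹' {y | 2 * y ^ 2 = -b ∨ y ^ 2 = -2 * b} ⊆
      {y | 2 * y ^ 2 = -b ∨ y ^ 2 = -2 * b} := by
  intro x hfx
  rcases eq_or_ne x 0 with rfl | hx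
  · exact absurd (by simpa using hfx) hb
  have hrel := addDiv_mul_self (b := b) hx
  rw [mem_preimage] at hfx
  generalize addDiv b x = y at hfx hrel
  rcases hfx with hy | hy
  · have hfactor : (x - 2 * y) * (x + y) = 0 := by linear_combination -hrel - hy
    rcases mul_eq_zero.1 hfactor with h | h
    · right; linear_combination (x + 2 * y) * h + 2 * hy
    · left; linear_combination 2 * (x - y) * h + hy
  · -- here the discriminant of `X² - yX + b` is `y² - 4b = 3y²`
    obtain rfl := Rat.eq_zero_of_sq_eq_prime_mul_sq (p := 3) (by norm_num)
      (x := 2 * x - y) (y := y) (by push_cast; linear_combination -4 * hrel - 2 * hy)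
    exact absurd (by linear_combination hy / 2) hb

section padicValRat

variable {p : ℕ} [Fact p.Prime]

-- the points with `|x|_p ^ 2 > |b|_p`, on which `addDiv b` preserves `|x|_p`
def padicLargeSet (p : ℕ) (b : ℚ) : Set ℚ :=
  {x | x ≠ 0 ∧ 2 * padicValRat p x < padicValRat p b}

theorem addDiv_ne_zero_of_two_mul_padicValRat_ne (hx : x ≠ 0)
    (h : 2 * padicValRat p x ≠ padicValRat p b) : addDiv b x ≠ 0 := by
  rw [Ne, addDiv_eq_zero_iff hx]
  intro hb
  obtain rfl : b = -x ^ 2 := by linear_combination hb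
  rw [padicValRat.neg, padicValRat.pow x] at h
  exact h (by push_cast; ring)

theorem padicValRat_addDiv_of_lt (hb : b ≠ 0) (hx : x ≠ 0)
    (h : 2 * padicValRat p x < padicValRat p b) : padicValRat p (addDiv b x) = padicValRat p x :=
  padicValRat.add_eq_of_lt (addDiv_ne_zero_of_two_mul_padicValRat_ne hx h.ne) hx
    (div_ne_zero hb hx) (by rw [padicValRat.div hb hx]; omega)

theorem padicValRat_addDiv_of_gt (hb : b ≠ 0) (hx : x ≠ 0)
    (h : padicValRat p b < 2 * padicValRat p x) :
    padicValRat p (addDiv b x) = padicValRat p b - padicValRat p x := by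
  have hfx := addDiv_ne_zero_of_two_mul_padicValRat_ne hx h.ne'
  rw [addDiv, add_comm] at hfx ⊢
  rw [padicValRat.add_eq_of_lt hfx (div_ne_zero hb hx) hx (by rw [padicValRat.div hb hx]; omega),
    padicValRat.div hb hx]

theorem mapsTo_addDiv_padicLargeSet (hb : b ≠ 0) :
    MapsTo (addDiv b) (padicLargeSet p b) (padicLargeSet p b) := fun x ⟨hx, h⟩ =>
  ⟨addDiv_ne_zero_of_two_mul_padicValRat_ne hx h.ne, by rwa [padicValRat_addDiv_of_lt hb hx h]⟩

theorem addDiv_mem_padicLargeSet_of_gt (hb : b ≠ 0) (hx : x ≠ 0)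
    (h : padicValRat p b < 2 * padicValRat p x) : addDiv b x ∈ padicLargeSet p b :=
  ⟨addDiv_ne_zero_of_two_mul_padicValRat_ne hx h.ne', by
    rw [padicValRat_addDiv_of_gt hb hx h]; omega⟩

theorem two_mul_padicValRat_eq_of_notMem_padicLargeSet (hb : b ≠ 0) (hx : x ≠ 0)
    (hx' : x ∉ padicLargeSet p b) (hfx : addDiv b x ∉ padicLargeSet p b) :
    2 * padicValRat p x = padicValRat p b := by
  have h1 : ¬ 2 * padicValRat p x < padicValRat p b := fun h => hx' ⟨hx, h⟩
  have h2 : ¬ padicValRat p b < 2 * padicValRat p x := fun h =>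
    hfx (addDiv_mem_padicLargeSet_of_gt hb hx h)
  omega

theorem padicValRat_addDiv_of_isPeriodicPt {n : ℕ} (hb : b ≠ 0) (hx : x ≠ 0)
    (hper : IsPeriodicPt (addDiv b) n x) (hn : 0 < n) :
    padicValRat p (addDiv b x) = padicValRat p x := by
  by_cases hlarge : x ∈ padicLargeSet p b
  · exact padicValRat_addDiv_of_lt hb hx hlarge.2
  have hmaps := mapsTo_addDiv_padicLargeSet (p := p) hb
  have h1 : addDiv b x ∉ padicLargeSet p b := fun h =>
    hlarge (hper.mem_of_iterate_mem hn hmaps (j := 1) h)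
  have h2 : addDiv b (addDiv b x) ∉ padicLargeSet p b := fun h =>
    hlarge (hper.mem_of_iterate_mem hn hmaps (j := 2) h)
  have e1 := two_mul_padicValRat_eq_of_notMem_padicLargeSet hb hx hlarge h1
  have e2 := two_mul_padicValRat_eq_of_notMem_padicLargeSet hb
    (addDiv_ne_zero_of_isPeriodicPt hx hper hn) h1 h2
  omega

end padicValRat

theorem two_mul_sq_eq_neg_of_isPeriodicPt {n : ℕ} (hb : b ≠ 0) (hx : x ≠ 0)
    (hper : IsPeriodicPt (addDiv b) n x) (hn : 0 < n) : 2 * x ^ 2 = -b := by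
  have hfx := addDiv_ne_zero_of_isPeriodicPt hx hper hn
  have hratio := Rat.eq_one_or_neg_one_of_padicValRat_eq_zero (div_ne_zero hfx hx) fun p hp => by
    have := Fact.mk hp
    rw [padicValRat.div hfx hx, padicValRat_addDiv_of_isPeriodicPt hb hx hper hn, sub_self]
  have hrel := addDiv_mul_self (b := b) hx
  rcases hratio with h | h <;> rw [div_eq_iff hx] at h <;> rw [h] at hrel
  · exact absurd (by linear_combination -hrel) hb
  · linear_combination -hrel

theorem preperiodic_addDiv_iff (hb : b ≠ 0) :
    (x ≠ 0 ∧ ∃ m n : ℕ, m < n ∧ (addDiv b)^[n] x = (addDiv b)^[m] x) ↔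
      x ∈ sqrtSet b := by
  constructor
  · rintro ⟨hx, m, n, hmn, heq⟩
    have hper : IsPeriodicPt (addDiv b) (n - m) ((addDiv b)^[m] x) := by
      rw [IsPeriodicPt, IsFixedPt, ← iterate_add_apply, Nat.sub_add_cancel hmn.le, heq]
    by_cases hy : (addDiv b)^[m] x = 0
    · have := mem_of_iterate_mem_of_preimage_subset (addDiv_preimage_sq_eq_neg_subset hb)
        (show (addDiv b)^[m] x ∈ {y | y = 0 ∨ y ^ 2 = -b} from Or.inl hy)
      exact Or.inl (this.resolve_left hx)
    · exact Or.inr (mem_of_iterate_mem_of_preimage_subset (addDiv_preimage_two_mul_sq_subset hb)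
        (show (addDiv b)^[m] x ∈ {y | 2 * y ^ 2 = -b ∨ y ^ 2 = -2 * b} from
          Or.inl (two_mul_sq_eq_neg_of_isPeriodicPt hb hy hper (by omega))))
  · intro h
    refine ⟨?_, 1, 3, by norm_num, addDiv_iterate_three h⟩
    rintro rfl
    apply hb
    rcases h with h | h | h <;> linarith

theorem sqrtSet_eq_of_sq_eq_neg (hb : b ≠ 0) {s : ℚ} (hs : s ^ 2 = -b) :
    sqrtSet b = {s, -s} := by
  have h2 : ∀ x : ℚ, 2 * x ^ 2 ≠ -b := fun x h => by
    obtain rfl := Rat.eq_zero_of_sq_eq_prime_mul_sq Nat.prime_two (x := s) (y := x)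
      (by push_cast; linear_combination hs - h)
    exact hb (by linarith)
  have h3 : ∀ x : ℚ, x ^ 2 ≠ -2 * b := fun x h => by
    obtain rfl := Rat.eq_zero_of_sq_eq_prime_mul_sq Nat.prime_two (x := x) (y := s)
      (by push_cast; linear_combination h - 2 * hs)
    exact hb (by linarith)
  ext x
  rw [mem_insert_iff, mem_singleton_iff, ← sq_eq_sq_iff_eq_or_eq_neg, hs]
  refine ⟨?_, Or.inl⟩
  rintro (h | h | h)
  · exact h
  · exact absurd h (h2 x)
  · exact absurd h (h3 x)

theorem sqrtSet_eq_of_two_mul_sq_eq_neg (hb : b ≠ 0) {t : ℚ} (ht : 2 * t ^ 2 = -b) :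
    sqrtSet b = {t, -t, 2 * t, -2 * t} := by
  have h1 : ∀ x : ℚ, x ^ 2 ≠ -b := fun x h => by
    obtain rfl := Rat.eq_zero_of_sq_eq_prime_mul_sq Nat.prime_two (x := x) (y := t)
      (by push_cast; linear_combination h - ht)
    exact hb (by linarith)
  ext x
  simp only [mem_insert_iff, mem_singleton_iff]
  rw [← or_assoc, neg_mul, ← sq_eq_sq_iff_eq_or_eq_neg, ← sq_eq_sq_iff_eq_or_eq_neg]
  constructor
  · rintro (h | h | h)
    · exact absurd h (h1 x)
    · left; linear_combination h / 2 - ht / 2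
    · right; linear_combination h - 2 * ht
  · rintro (h | h)
    · right; left; linear_combination 2 * h + ht
    · right; right; linear_combination h + 2 * ht

theorem sqrtSet_eq_empty (h1 : ∀ s : ℚ, s ^ 2 ≠ -b) (h2 : ∀ t : ℚ, 2 * t ^ 2 ≠ -b) :
    sqrtSet b = ∅ :=
  eq_empty_iff_forall_notMem.2 fun x hx => by
    rcases hx with h | h | h
    · exact h1 x h
    · exact h2 x h
    · exact h2 (x / 2) (by linear_combination h / 2)

theorem finite_and_ncard_sqrtSet (hb : b ≠ 0) :
    (sqrtSet b).Finite ∧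
      ((sqrtSet b).ncard = 0 ∨ (sqrtSet b).ncard = 2 ∨ (sqrtSet b).ncard = 4) := by
  by_cases hs : ∃ s, s ^ 2 = -b
  · obtain ⟨s, hs⟩ := hs
    have hs0 : s ≠ 0 := by rintro rfl; exact hb (by linarith)
    rw [sqrtSet_eq_of_sq_eq_neg hb hs]
    exact ⟨toFinite _, Or.inr (Or.inl (ncard_pair fun h => hs0 (by linarith)))⟩
  by_cases ht : ∃ t, 2 * t ^ 2 = -b
  · obtain ⟨t, ht⟩ := ht
    have ht0 : t ≠ 0 := by rintro rfl; exact hb (by linarith)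
    rw [sqrtSet_eq_of_two_mul_sq_eq_neg hb ht]
    refine ⟨toFinite _, Or.inr (Or.inr (ncard_eq_four.2
      ⟨_, _, _, _, ?_, ?_, ?_, ?_, ?_, ?_, rfl⟩))⟩ <;> intro h <;> exact ht0 (by linarith)
  simp only [not_exists] at hs ht
  rw [sqrtSet_eq_empty hs ht]
  simp

end addDiv

/-- The set of nonzero rational preperiodic points of `z ↦ z + b/z` (with `b ∈ ℚ*`)
is finite, of cardinality `0`, `2` or `4`. -/
theorem card_preperiodic_add (b : ℚ) (hb : b ≠ 0) :
    {z : ℚ | z ≠ 0 ∧ ∃ m n : ℕ, m < n ∧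
        (fun w : ℚ => w + b / w)^[n] z = (fun w : ℚ => w + b / w)^[m] z}.Finite ∧
      ({z : ℚ | z ≠ 0 ∧ ∃ m n : ℕ, m < n ∧
          (fun w : ℚ => w + b / w)^[n] z = (fun w : ℚ => w + b / w)^[m] z}.ncard = 0 ∨
        {z : ℚ | z ≠ 0 ∧ ∃ m n : ℕ, m < n ∧
          (fun w : ℚ => w + b / w)^[n] z = (fun w : ℚ => w + b / w)^[m] z}.ncard = 2 ∨
        {z : ℚ | z ≠ 0 ∧ ∃ m n : ℕ, m < n ∧
          (fun w : ℚ => w + b / w)^[n] z = (fun w : ℚ => w + b / w)^[m] z}.ncard = 4) := by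
  simp only [show (fun w : ℚ => w + b / w) = addDiv b from rfl, preperiodic_addDiv_iff hb,
    ofPred_mem_eq]
  exact finite_and_ncard_sqrtSet hb
end

section
/- Let b be a nonzero rational number and let g_b : ℚ → ℚ be given by g_b(z) = −(z + b/z). If a nonzero z ∈ ℚ is a periodic point of g_b (i.e. g_b^[n](z) = z for some n ≥ 1), then z is a fixed point: g_b(z) = z. (In the paper's formulation on P¹: every rational periodic point of z ↦ −(z + b/z) is a fixed point; in particular there are no rational points of exact period 2, 3, or 4.) -/
/-!
Write `g w = -(w + b / w) = -(w ^ 2 + b) / w`, fix a prime `p` and let `v = padicValRat p`. Along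
the orbit `z_k` of `z` (which avoids the fixed point `0`) the ultrametric inequality gives:
if `2 v(z_k) < v(b)` then `v(z_{k+1}) = v(z_k)`, and if `2 v(z_k) > v(b)` then
`2 v(z_{k+1}) = 2 v(b) - 2 v(z_k) < v(b)`. So once `2 v(z_k)` drops below `v(b)` it stays
constant, and if it never does then `2 v(z_k) = v(b)` throughout; as the sequence is periodic,
it is constant either way. Hence `v(g z) = v(z)` for every `p`, so `g z / z = ±1`, and
`g z = -z` would force `b = 0`.
-/

open Function

theorem Rat.eq_one_or_eq_neg_one_of_padicValRat_eq_zero {r : ℚ} (hr : r ≠ 0)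
    (h : ∀ p : ℕ, p.Prime → padicValRat p r = 0) : r = 1 ∨ r = -1 := by
  have hden : r.den = 1 := Nat.eq_one_iff_not_exists_prime_dvd.2 fun p hp hpd => by
    have := Fact.mk hp
    have hnum : padicValInt p r.num = 0 :=
      padicValInt.eq_zero_of_not_dvd fun hpn => hp.one_lt.ne' <| Nat.dvd_one.1 <|
        r.reduced ▸ Nat.dvd_gcd (Int.natCast_dvd.1 hpn) hpd
    have hv := h p hp
    rw [padicValRat_def, hnum] at hv
    have := one_le_padicValNat_of_dvd r.den_ne_zero hpd
    omega
  have hr' : r = r.num := (Rat.coe_int_num_of_den_eq_one hden).symm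
  have hnum : r.num.natAbs = 1 := Nat.eq_one_iff_not_exists_prime_dvd.2 fun p hp hpn => by
    have := Fact.mk hp
    have hv := h p hp
    rw [hr', padicValRat.of_int, padicValInt] at hv
    have := one_le_padicValNat_of_dvd (Int.natAbs_ne_zero.2 (Rat.num_ne_zero.2 hr)) hpn
    omega
  rcases Int.natAbs_eq_iff.1 hnum with h1 | h1 <;> rw [hr', h1] <;> norm_num

theorem Function.IsPeriodicPt.iterate_ne_of_isFixedPt {α : Type*} {f : α → α} {x y : α}
    {n : ℕ} (hx : IsPeriodicPt f n x) (hn : 0 < n) (hy : IsFixedPt f y) (hxy : x ≠ y) (k : ℕ) :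
    f^[k] x ≠ y := fun hk => hxy <|
  calc x = f^[n * k] x := (hx.mul_const k).eq.symm
    _ = f^[n * k - k] (f^[k] x) := by
      rw [← iterate_add_apply, Nat.sub_add_cancel (Nat.le_mul_of_pos_left k hn)]
    _ = y := hk ▸ hy.iterate _

theorem Function.Periodic.apply_eq_apply_zero_of_threshold {α : Type*} [LinearOrder α]
    {a : ℕ → α} {n : ℕ} {t : α} (ha : Periodic a n) (hn : 0 < n)
    (hbelow : ∀ k, a k < t → a (k + 1) = a k)
    (habove : ∀ k, t < a k → a (k + 1) < t) (k : ℕ) : a k = a 0 := by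
  by_cases hlow : ∃ j, a j < t
  · obtain ⟨j, hj⟩ := hlow
    have hstay : ∀ m, a (j + m) = a j := fun m => by
      induction m with
      | zero => rfl
      | succ m ih => rw [← add_assoc, hbelow _ (ih ▸ hj), ih]
    have hall : ∀ i, a i = a j := fun i => by
      obtain ⟨m, hm⟩ := Nat.exists_eq_add_of_le
        ((Nat.le_mul_of_pos_right j hn).trans (Nat.le_add_left (j * n) i))
      rw [← ha.nat_mul j i, Nat.cast_id, hm, hstay]
    rw [hall k, hall 0]
  · push Not at hlow
    have hall : ∀ i, a i = t := fun i =>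
      (hlow i).antisymm' (not_lt.1 fun h => (habove i h).not_ge (hlow _))
    rw [hall k, hall 0]

-- Also at `w = 0`, where both sides are `0`.
theorem neg_add_div_eq_neg_sq_add_div {K : Type*} [Field K] (w b : K) :
    -(w + b / w) = -(w ^ 2 + b) / w := by
  rcases eq_or_ne w 0 with rfl | hw
  · simp
  · field_simp

section Padic

variable {p : ℕ} [Fact p.Prime] {b w : ℚ}

theorem padicValRat_neg_add_div (hw : w ≠ 0) (hwb : w ^ 2 + b ≠ 0) :
    padicValRat p (-(w + b / w)) = padicValRat p (w ^ 2 + b) - padicValRat p w := by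
  rw [neg_add_div_eq_neg_sq_add_div, neg_div, padicValRat.neg, padicValRat.div hwb hw]

theorem padicValRat_neg_add_div_of_lt (hb : b ≠ 0) (hw : w ≠ 0) (hwb : w ^ 2 + b ≠ 0)
    (h : 2 * padicValRat p w < padicValRat p b) :
    padicValRat p (-(w + b / w)) = padicValRat p w := by
  have : padicValRat p (w ^ 2 + b) = 2 * padicValRat p w := by
    rw [padicValRat.add_eq_of_lt hwb (pow_ne_zero 2 hw) hb (by simpa using h)]
    simp
  rw [padicValRat_neg_add_div hw hwb, this]
  ring

theorem two_mul_padicValRat_neg_add_div_lt (hb : b ≠ 0) (hw : w ≠ 0) (hwb : w ^ 2 + b ≠ 0)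
    (h : padicValRat p b < 2 * padicValRat p w) :
    2 * padicValRat p (-(w + b / w)) < padicValRat p b := by
  have : padicValRat p (w ^ 2 + b) = padicValRat p b := by
    rw [add_comm] at hwb ⊢
    exact padicValRat.add_eq_of_lt hwb hb (pow_ne_zero 2 hw) (by simpa using h)
  rw [padicValRat_neg_add_div hw hwb, this]
  linarith

end Padic

theorem padicValRat_neg_add_div_eq_of_isPeriodicPt {p : ℕ} [Fact p.Prime] {b z : ℚ} {n : ℕ}
    (hb : b ≠ 0) (hz : z ≠ 0) (hn : 0 < n) (hper : IsPeriodicPt (fun w : ℚ => -(w + b / w)) n z) :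
    padicValRat p (-(z + b / z)) = padicValRat p z := by
  set g : ℚ → ℚ := fun w => -(w + b / w)
  have hstep (k : ℕ) : g^[k + 1] z = -(g^[k] z + b / g^[k] z) := iterate_succ_apply' g k z
  have horbit : ∀ k, g^[k] z ≠ 0 := hper.iterate_ne_of_isFixedPt hn (by simp [IsFixedPt, g]) hz
  have hsq (k : ℕ) : (g^[k] z) ^ 2 + b ≠ 0 := fun h =>
    horbit (k + 1) <| by rw [hstep, neg_add_div_eq_neg_sq_add_div, h, neg_zero, zero_div]
  have hperiodic : Periodic (fun k => 2 * padicValRat p (g^[k] z)) n := fun k => by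
    simp only [iterate_add_apply, hper.eq]
  have hconst := hperiodic.apply_eq_apply_zero_of_threshold hn (t := padicValRat p b)
    (fun k h => by simp only [hstep, padicValRat_neg_add_div_of_lt hb (horbit k) (hsq k) h])
    (fun k h => by
      simpa only [hstep] using two_mul_padicValRat_neg_add_div_lt hb (horbit k) (hsq k) h) 1
  exact (mul_right_inj' two_ne_zero).1 hconst

/-- Every nonzero rational periodic point of `z ↦ -(z + b/z)` (with `b ∈ ℚ*`)
is a fixed point. -/
theorem periodic_points_neg (b : ℚ) (hb : b ≠ 0) (z : ℚ) (hz : z ≠ 0)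
    (n : ℕ) (hn : 1 ≤ n) (hper : (fun w : ℚ => -(w + b / w))^[n] z = z) :
    -(z + b / z) = z := by
  have hgz : -(z + b / z) ≠ 0 :=
    IsPeriodicPt.iterate_ne_of_isFixedPt (f := fun w : ℚ => -(w + b / w)) hper hn
      (by simp [IsFixedPt]) hz 1
  have hval (p : ℕ) (hp : p.Prime) : padicValRat p (-(z + b / z) / z) = 0 := by
    have := Fact.mk hp
    rw [padicValRat.div hgz hz, padicValRat_neg_add_div_eq_of_isPeriodicPt hb hz hn hper, sub_self]
  rcases Rat.eq_one_or_eq_neg_one_of_padicValRat_eq_zero (div_ne_zero hgz hz) hval with h | h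
  · exact (div_eq_one_iff_eq hz).1 h
  · rw [div_eq_iff hz, neg_one_mul, neg_inj, add_eq_left, div_eq_zero_iff] at h
    exact absurd (h.resolve_right hz) hb
end
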